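/- Let λ, μ > 0 with ρ = λ/μ < 1, let i ≥ 0 be an integer, and let t ≥ 0. Then the series ∑_{j=0}^∞ p_{ij}(t) converges and equals 1, where p_{ij}(t) = (2/π)·ρ^{(j−i)/2}·∫₀^π e^{−μ t γ(y)}/γ(y) · a_i(y)·a_j(y) dy + (1−ρ)·ρ^j. -/

import Mathlib

open Real MeasureTheory Set Filter

/-- γ(y) = 1 + ρ − 2√ρ·cos(y). -/
noncomputable def gam (ρ y : ℝ) : ℝ := 1 + ρ - 2 * Real.sqrt ρ * Real.cos y

/-- a_k(y) = sin(k·y) − √ρ·sin((k+1)·y). -/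
noncomputable def aco (ρ : ℝ) (k : ℕ) (y : ℝ) : ℝ :=
  Real.sin ((k : ℝ) * y) - Real.sqrt ρ * Real.sin (((k : ℝ) + 1) * y)

/-- Transient expected queue length of an M/M/1 queue started with `i` customers. -/
noncomputable def EL (lam mu : ℝ) (i : ℕ) (t : ℝ) : ℝ :=
  (2 / Real.pi) * (lam / mu) ^ ((1 - (i : ℝ)) / 2) *
    (∫ y in (0 : ℝ)..Real.pi,
      Real.exp (-(mu * t * gam (lam / mu) y)) / (gam (lam / mu) y) ^ 2 *
        (aco (lam / mu) i y * Real.sin y)) +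
  (lam / mu) / (1 - lam / mu)

/-- Transient probability that an M/M/1 queue started with `i` customers has `j` at time `t`. -/
noncomputable def pq (lam mu : ℝ) (i j : ℕ) (t : ℝ) : ℝ :=
  (2 / Real.pi) * (lam / mu) ^ (((j : ℝ) - (i : ℝ)) / 2) *
    (∫ y in (0 : ℝ)..Real.pi,
      Real.exp (-(mu * t * gam (lam / mu) y)) / gam (lam / mu) y *
        (aco (lam / mu) i y * aco (lam / mu) j y)) +
  (1 - lam / mu) * (lam / mu) ^ j

/-- Erlang(n) density with rate `mu`: f_n(t) = μⁿ t^{n−1} e^{−μt}/(n−1)!. -/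
noncomputable def erl (mu : ℝ) (n : ℕ) (t : ℝ) : ℝ :=
  mu ^ n * t ^ (n - 1) * Real.exp (-(mu * t)) / (Nat.factorial (n - 1) : ℝ)

/-- Expected total time to complete queue with `a` customers first, then queue with `b`. -/
noncomputable def ETT (lam mu : ℝ) (a b : ℕ) : ℝ :=
  ((a : ℝ) + 2) / mu + (1 / mu) * ∫ t in Set.Ioi (0 : ℝ), erl mu (a + 1) t * EL lam mu b t

/-! With `r = √ρ` one has `r ^ j * a_j(y) = b_j - b_{j+1}` for `b_j = r ^ j * sin (j y)`, so
`∑_j ρ^{(j-i)/2} a_j(y)` telescopes to `ρ^{-i/2} b_0 = 0` for every `y`. The geometric bound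
`|r ^ j a_j(y)| ≤ (1 + r) r ^ j` lets the sum pass under the integral, so the integral terms of
`p_{ij}(t)` sum to `0`, while `∑_j (1 - ρ) ρ ^ j = 1`. -/

lemma hasSum_pow_mul_sin_sub {r : ℝ} (hr : |r| < 1) (y : ℝ) :
    HasSum (fun j : ℕ => r ^ j * (sin (j * y) - r * sin ((j + 1) * y))) 0 := by
  have hb : Summable fun j : ℕ => r ^ j * sin (j * y) := by
    refine (summable_geometric_of_lt_one (abs_nonneg r) hr).of_norm_bounded fun j => ?_
    simp only [norm_mul, norm_pow, Real.norm_eq_abs]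
    exact mul_le_of_le_one_right (by positivity) (abs_sin_le_one _)
  have hshift : HasSum (fun j : ℕ => r ^ (j + 1) * sin ((j + 1) * y))
      (∑' j : ℕ, r ^ j * sin (j * y)) := by
    simpa using (hasSum_nat_add_iff' 1).2 hb.hasSum
  have h := hb.hasSum.sub hshift
  rw [sub_self] at h
  exact h.congr_fun fun j => by ring

lemma sqrt_lt_one_of_lt_one {x : ℝ} (h : x < 1) : √x < 1 :=
  (sqrt_lt' one_pos).2 (by simpa using h)

lemma hasSum_sqrt_pow_mul_aco {ρ : ℝ} (hρ : ρ < 1) (y : ℝ) :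
    HasSum (fun j : ℕ => √ρ ^ j * aco ρ j y) 0 :=
  hasSum_pow_mul_sin_sub (by rw [abs_of_nonneg (sqrt_nonneg ρ)]; exact sqrt_lt_one_of_lt_one hρ) y

@[fun_prop]
lemma continuous_aco (ρ : ℝ) (k : ℕ) : Continuous (aco ρ k) := by
  unfold aco
  fun_prop

lemma abs_aco_le (ρ : ℝ) (k : ℕ) (y : ℝ) : |aco ρ k y| ≤ 1 + √ρ :=
  calc |aco ρ k y| ≤ |sin (k * y)| + |√ρ * sin ((k + 1) * y)| := abs_sub _ _
    _ ≤ 1 + √ρ := by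
      rw [abs_mul, abs_of_nonneg (sqrt_nonneg ρ)]
      gcongr
      · exact abs_sin_le_one _
      · exact mul_le_of_le_one_right (sqrt_nonneg ρ) (abs_sin_le_one _)

lemma hasSum_intervalIntegral_mul_sqrt_pow_mul_aco {ρ : ℝ} (hρ : ρ < 1) {w : ℝ → ℝ} {a b : ℝ}
    (hw : IntervalIntegrable w volume a b) :
    HasSum (fun j : ℕ => ∫ y in a..b, w y * (√ρ ^ j * aco ρ j y)) 0 := by
  have hgeom := summable_geometric_of_lt_one (sqrt_nonneg ρ) (sqrt_lt_one_of_lt_one hρ)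
  have hsum := intervalIntegral.hasSum_integral_of_dominated_convergence (μ := volume)
    (F := fun (j : ℕ) y => w y * (√ρ ^ j * aco ρ j y)) (f := fun _ => 0)
    (fun j y => |w y| * (1 + √ρ) * √ρ ^ j)
    (fun j => hw.def'.aestronglyMeasurable.mul
      (continuous_const.mul (continuous_aco ρ j)).aestronglyMeasurable)
    (fun j => .of_forall fun y _ => by
      simp only [norm_mul, norm_pow, Real.norm_eq_abs, abs_of_nonneg (sqrt_nonneg ρ)]
      rw [mul_assoc, mul_comm (√ρ ^ j)]
      gcongr
      exact abs_aco_le ρ j y)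
    (.of_forall fun y _ => hgeom.mul_left _)
    (by simpa only [tsum_mul_left] using (hw.abs.mul_const _).mul_const _)
    (.of_forall fun y _ => by simpa using (hasSum_sqrt_pow_mul_aco hρ y).mul_left (w y))
  simpa using hsum

lemma gam_pos {ρ : ℝ} (hρ0 : 0 ≤ ρ) (hρ1 : ρ < 1) (y : ℝ) : 0 < gam ρ y := by
  have hr := sqrt_lt_one_of_lt_one hρ1
  have hsq : √ρ ^ 2 = ρ := sq_sqrt hρ0
  have hcos : √ρ * cos y ≤ √ρ := mul_le_of_le_one_right (sqrt_nonneg ρ) (cos_le_one y)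
  unfold gam
  nlinarith

@[fun_prop]
lemma continuous_gam (ρ : ℝ) : Continuous (gam ρ) := by
  unfold gam
  fun_prop

lemma rpow_sub_div_two {ρ : ℝ} (hρ : 0 < ρ) (i j : ℕ) :
    ρ ^ (((j : ℝ) - i) / 2) = ρ ^ (-(i : ℝ) / 2) * √ρ ^ j := by
  rw [sqrt_eq_rpow, ← rpow_natCast, ← rpow_mul hρ.le, ← rpow_add hρ]
  ring_nf

lemma hasSum_one_sub_mul_pow {ρ : ℝ} (hρ0 : 0 ≤ ρ) (hρ1 : ρ < 1) :
    HasSum (fun j : ℕ => (1 - ρ) * ρ ^ j) 1 := by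
  simpa [mul_inv_cancel₀ (sub_ne_zero.2 hρ1.ne')] using
    (hasSum_geometric_of_lt_one hρ0 hρ1).mul_left (1 - ρ)

theorem pq_hasSum_one_general (lam mu : ℝ) (hlam : 0 < lam) (hmu : 0 < mu)
    (hρ : lam / mu < 1) (i : ℕ) (t : ℝ) :
    HasSum (fun j : ℕ => pq lam mu i j t) 1 := by
  set ρ := lam / mu with hρ_def
  have hρ0 : 0 < ρ := div_pos hlam hmu
  have hw : Continuous fun y => exp (-(mu * t * gam ρ y)) / gam ρ y * aco ρ i y := by
    fun_prop (disch := exact fun y => (gam_pos hρ0.le hρ y).ne')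
  have hintegrals := (hasSum_intervalIntegral_mul_sqrt_pow_mul_aco hρ
    (hw.intervalIntegrable 0 π)).mul_left (2 / π * ρ ^ (-(i : ℝ) / 2))
  have h := hintegrals.add (hasSum_one_sub_mul_pow hρ0.le hρ)
  rw [mul_zero, zero_add] at h
  refine h.congr_fun fun j => ?_
  rw [pq, ← hρ_def, rpow_sub_div_two hρ0, ← intervalIntegral.integral_const_mul,
    ← intervalIntegral.integral_const_mul]
  congr 2
  ext y
  ring

/-- The transient probabilities sum to 1: ∑_j p_{ij}(t) = 1. -/
theorem pq_hasSum_one (lam mu : ℝ) (hlam : 0 < lam) (hmu : 0 < mu)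
    (hρ : lam / mu < 1) (i : ℕ) (t : ℝ) (ht : 0 ≤ t) :
    HasSum (fun j : ℕ => pq lam mu i j t) 1 :=
  pq_hasSum_one_general lam mu hlam hmu hρ i t
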